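/- The measure μ̂ with density 1/(u-v)² on Σ × Σ₀ is invariant under the natural extension F̂ of the octagon Farey map: the pushforward of μ̂ under F̂ equals μ̂, i.e. μ̂(F̂⁻¹(D)) = μ̂(D) for every Borel set D ⊆ ℝ². -/

import Mathlib

open MeasureTheory Set

noncomputable section

/-- The linear fractional transformation of `ℝ` induced by a 2×2 real matrix,
with the convention that the value is `0` when the denominator vanishes. -/
def mob (M : Matrix (Fin 2) (Fin 2) ℝ) (u : ℝ) : ℝ :=
  (M 0 0 * u + M 0 1) / (M 1 0 * u + M 1 1)

/-- The matrix `γ = [[-1, 2+2√2],[0,1]]`. -/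
def gam : Matrix (Fin 2) (Fin 2) ℝ := !![-1, 2 + 2 * Real.sqrt 2; 0, 1]

/-- The isometries `ν₁, …, ν₇` of the octagon. -/
def nu : ℕ → Matrix (Fin 2) (Fin 2) ℝ
  | 1 => (Real.sqrt 2)⁻¹ • !![1, 1; 1, -1]
  | 2 => (Real.sqrt 2)⁻¹ • !![1, 1; -1, 1]
  | 3 => !![0, 1; 1, 0]
  | 4 => !![0, 1; -1, 0]
  | 5 => (Real.sqrt 2)⁻¹ • !![-1, 1; 1, 1]
  | 6 => (Real.sqrt 2)⁻¹ • !![-1, 1; -1, -1]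
  | 7 => !![-1, 0; 0, 1]
  | _ => 1

/-- The index `i` of the sector `Σᵢ` (in inverse-slope coordinates) containing `u`:
`Σ₀ = (1+√2, ∞)`, `Σ₁ = (1, 1+√2]`, `Σ₂ = (√2-1, 1]`, `Σ₃ = (0, √2-1]`, `Σ₄ = (1-√2, 0]`,
`Σ₅ = (-1, 1-√2]`, `Σ₆ = (-1-√2, -1]`, `Σ₇ = (-∞, -1-√2]`. -/
def sectorIndex (u : ℝ) : ℕ :=
  if 1 + Real.sqrt 2 < u then 0
  else if 1 < u then 1
  else if Real.sqrt 2 - 1 < u then 2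
  else if 0 < u then 3
  else if 1 - Real.sqrt 2 < u then 4
  else if -1 < u then 5
  else if -(1 + Real.sqrt 2) < u then 6
  else 7

/-- The octagon Farey map in inverse-slope coordinates: `F(u) = (γ·νᵢ)[u]` for `u ∈ Σᵢ`
(`i = 1,…,7`), and `F(u) = u` for `u ∈ Σ₀`. -/
def F (u : ℝ) : ℝ :=
  if sectorIndex u = 0 then u else mob (gam * nu (sectorIndex u)) u

/-- The natural extension of the octagon Farey map:
`F̂(u,v) = ((γ·νᵢ)[u], (γ·νᵢ)[v])` for `u ∈ Σᵢ` (`i = 1,…,7`), and `F̂(u,v) = (u,v)`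
for `u ∈ Σ₀`. -/
def Fhat (p : ℝ × ℝ) : ℝ × ℝ :=
  if sectorIndex p.1 = 0 then p
  else (mob (gam * nu (sectorIndex p.1)) p.1, mob (gam * nu (sectorIndex p.1)) p.2)

/-- The measure with density `1/(u-v)²` on `Σ × Σ₀ = (-∞, 1+√2) × (1+√2, ∞)`
and `0` elsewhere. -/
def fareyMeasureHat : Measure (ℝ × ℝ) :=
  volume.withDensity
    ((Set.Iio (1 + Real.sqrt 2) ×ˢ Set.Ioi (1 + Real.sqrt 2)).indicator
      fun p => ENNReal.ofReal ((p.1 - p.2) ^ 2)⁻¹)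


/-!
The measure `du dv / (u - v)²` is invariant under every Möbius map `g` acting diagonally on
pairs: `g u - g v = det · (u - v) / ((c u + d) (c v + d))` and `g' u = det / (c u + d)²`, so the
Jacobian `|g' u · g' v|` exactly compensates the change of `(u - v)⁻²`.

Up to null sets, `Σ × Σ₀` is the disjoint union of the pieces `Σᵢ × Σ₀`, on which `F̂` acts by
the Möbius map `γνᵢ`. The isometry `νᵢ` maps `Σᵢ` onto `Σ₀` and `Σ₀` onto `Σ_τ(i)`, where `τ`
swaps `2` and `6`, and the reflection `γ u = 2 + 2√2 - u` exchanges `Σ₀` and `Σ`. Hence `F̂`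
carries `Σᵢ × Σ₀` onto `Σ × γ(Σ_τ(i))`, and these images tile `Σ × γ(Σ) = Σ × Σ₀`.
-/

section Mobius

variable {M N : Matrix (Fin 2) (Fin 2) ℝ} {u v : ℝ}

lemma mob_smul {r : ℝ} (hr : r ≠ 0) (M : Matrix (Fin 2) (Fin 2) ℝ) : mob (r • M) = mob M := by
  ext u
  simp only [mob, Matrix.smul_apply, smul_eq_mul, mul_assoc, ← mul_add, mul_div_mul_left _ _ hr]

lemma mob_neg (M : Matrix (Fin 2) (Fin 2) ℝ) : mob (-M) = mob M := by
  rw [← neg_one_smul ℝ M, mob_smul (by norm_num)]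

lemma mob_one (u : ℝ) : mob 1 u = u := by
  simp [mob]

lemma mob_mul (hu : N 1 0 * u + N 1 1 ≠ 0) : mob (M * N) u = mob M (mob N u) := by
  simp only [mob, Matrix.mul_apply, Fin.sum_univ_two]
  field_simp
  ring_nf

lemma measurable_mob (M : Matrix (Fin 2) (Fin 2) ℝ) : Measurable (mob M) := by
  unfold mob; fun_prop

lemma hasDerivAt_mob (hu : M 1 0 * u + M 1 1 ≠ 0) :
    HasDerivAt (mob M) (M.det / (M 1 0 * u + M 1 1) ^ 2) u := by
  have h := ((((hasDerivAt_id u).const_mul (M 0 0)).add_const (M 0 1)).div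
    (((hasDerivAt_id u).const_mul (M 1 0)).add_const (M 1 1)) hu)
  rw [Matrix.det_fin_two]
  exact h.congr_deriv (by simp only [id]; ring)

lemma mob_sub_mob (hu : M 1 0 * u + M 1 1 ≠ 0) (hv : M 1 0 * v + M 1 1 ≠ 0) :
    mob M u - mob M v = M.det * (u - v) / ((M 1 0 * u + M 1 1) * (M 1 0 * v + M 1 1)) := by
  rw [mob, mob, div_sub_div _ _ hu hv, Matrix.det_fin_two]
  ring

lemma injOn_mob (hdet : M.det ≠ 0) : InjOn (mob M) {u | M 1 0 * u + M 1 1 ≠ 0} := by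
  intro u (hu : _ ≠ 0) v (hv : _ ≠ 0) huv
  rw [← sub_eq_zero, mob_sub_mob hu hv] at huv
  simpa [hdet, hu, hv, sub_eq_zero] using huv

lemma image_mob_eq_of_mul_eq_one_or_neg_one (hMN : M * N = 1 ∨ M * N = -1) {S T : Set ℝ}
    (hN : ∀ y ∈ T, N 1 0 * y + N 1 1 ≠ 0) (hST : MapsTo (mob M) S T)
    (hTS : MapsTo (mob N) T S) : mob M '' S = T := by
  refine SurjOn.image_eq_of_mapsTo (fun y hy => ⟨mob N y, hTS hy, ?_⟩) hST
  rcases hMN with h | h <;> simp only [← mob_mul (hN y hy), h, mob_neg, mob_one]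

end Mobius

def geodesicMeasure : Measure (ℝ × ℝ) :=
  volume.withDensity fun p => ENNReal.ofReal ((p.1 - p.2) ^ 2)⁻¹

section Invariance

variable {M : Matrix (Fin 2) (Fin 2) ℝ} {u v : ℝ}

lemma abs_jacobian_mul_inv_sq_mob_sub (hdet : M.det ≠ 0) (hu : M 1 0 * u + M 1 1 ≠ 0)
    (hv : M 1 0 * v + M 1 1 ≠ 0) :
    |M.det / (M 1 0 * u + M 1 1) ^ 2 * (M.det / (M 1 0 * v + M 1 1) ^ 2)| *
      ((mob M u - mob M v) ^ 2)⁻¹ = ((u - v) ^ 2)⁻¹ := by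
  rw [mob_sub_mob hu hv, ← mul_div_mul_comm, ← sq, abs_of_nonneg (by positivity)]
  rcases eq_or_ne u v with rfl | huv
  · simp
  · have := sub_ne_zero.2 huv
    field_simp

theorem map_prodMap_mob_geodesicMeasure (hdet : M.det ≠ 0) {s : Set (ℝ × ℝ)}
    (hs : MeasurableSet s)
    (hpole : ∀ p ∈ s, M 1 0 * p.1 + M 1 1 ≠ 0 ∧ M 1 0 * p.2 + M 1 1 ≠ 0) :
    (geodesicMeasure.restrict s).map (Prod.map (mob M) (mob M)) =
      geodesicMeasure.restrict (Prod.map (mob M) (mob M) '' s) := by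
  set f := Prod.map (mob M) (mob M)
  have hf : Measurable f := (measurable_mob M).prodMap (measurable_mob M)
  have hf' : ∀ p ∈ s, HasFDerivWithinAt f
      ((ContinuousLinearMap.toSpanSingleton ℝ (M.det / (M 1 0 * p.1 + M 1 1) ^ 2)).prodMap
        (ContinuousLinearMap.toSpanSingleton ℝ (M.det / (M 1 0 * p.2 + M 1 1) ^ 2))) s p :=
    fun p hp => ((hasDerivAt_mob (hpole p hp).1).hasFDerivAt.prodMap p
      (hasDerivAt_mob (hpole p hp).2).hasFDerivAt).hasFDerivWithinAt
  have hinj : InjOn f s := ((injOn_mob hdet).prodMap (injOn_mob hdet)).mono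
    fun p hp => hpole p hp
  have hdetJ (a : ℝ) : LinearMap.det (ContinuousLinearMap.toSpanSingleton ℝ a : ℝ →ₗ[ℝ] ℝ) = a :=
    ContinuousLinearMap.det_toSpanSingleton a
  ext E hE
  rw [Measure.map_apply hf hE, Measure.restrict_apply (hf hE), Measure.restrict_apply hE,
    geodesicMeasure, withDensity_apply' _, withDensity_apply' _, ← setLIntegral_indicator hE,
    ← setLIntegral_indicator (hf hE),
    lintegral_image_eq_lintegral_abs_det_fderiv_mul volume hs hf' hinj]
  refine setLIntegral_congr_fun hs fun p hp => ?_
  simp only [ContinuousLinearMap.det, ContinuousLinearMap.coe_prodMap, LinearMap.det_prodMap,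
    hdetJ]
  by_cases hpE : f p ∈ E
  · rw [indicator_of_mem hpE, indicator_of_mem (mem_preimage.2 hpE),
      ← ENNReal.ofReal_mul (abs_nonneg _)]
    exact congrArg ENNReal.ofReal
      (abs_jacobian_mul_inv_sq_mob_sub hdet (hpole p hp).1 (hpole p hp).2).symm
  · rw [indicator_of_notMem hpE, indicator_of_notMem (by exact hpE), mul_zero]

theorem map_prodMap_mob_geodesicMeasure_prod (hdet : M.det ≠ 0) {A B : Set ℝ}
    (hA : MeasurableSet A) (hB : MeasurableSet B) (hpA : ∀ u ∈ A, M 1 0 * u + M 1 1 ≠ 0)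
    (hpB : ∀ v ∈ B, M 1 0 * v + M 1 1 ≠ 0) :
    (geodesicMeasure.restrict (A ×ˢ B)).map (Prod.map (mob M) (mob M)) =
      geodesicMeasure.restrict ((mob M '' A) ×ˢ (mob M '' B)) := by
  rw [map_prodMap_mob_geodesicMeasure hdet (hA.prod hB) fun p hp => ⟨hpA _ hp.1, hpB _ hp.2⟩,
    prodMap_image_prod]

lemma geodesicMeasure_ae_eq_of_prod {s t : Set (ℝ × ℝ)}
    (h : s =ᵐ[volume.prod volume] t) : s =ᵐ[geodesicMeasure] t :=
  (withDensity_absolutelyContinuous _ _).ae_eq (by rwa [Measure.volume_eq_prod])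

end Invariance

lemma MeasureTheory.Measure.restrict_eq_sum_of_ae_eq_biUnion {ι α : Type*} [MeasurableSpace α]
    {μ : Measure α} {s : Finset ι} {S : ι → Set α} {T : Set α} (hS : ∀ i, MeasurableSet (S i))
    (hd : (s : Set ι).PairwiseDisjoint S) (hT : ⋃ i ∈ s, S i =ᵐ[μ] T) :
    μ.restrict T = ∑ i ∈ s, μ.restrict (S i) := by
  rw [← Measure.restrict_congr_set hT, Measure.restrict_biUnion_finset hd hS]
  exact Measure.sum_coe_finset s fun i => μ.restrict (S i)

section Octagon

open Real

/-- `sector i` is the interior of `Σᵢ`; the finitely many boundary points are a null set. -/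
def sector : ℕ → Set ℝ
  | 0 => Ioi (1 + √2)
  | 1 => Ioo 1 (1 + √2)
  | 2 => Ioo (√2 - 1) 1
  | 3 => Ioo 0 (√2 - 1)
  | 4 => Ioo (1 - √2) 0
  | 5 => Ioo (-1) (1 - √2)
  | 6 => Ioo (-(1 + √2)) (-1)
  | 7 => Iio (-(1 + √2))
  | _ => ∅

local notation "τ" => Equiv.swap (2 : ℕ) 6

lemma measurableSet_sector (i : ℕ) : MeasurableSet (sector i) := by
  obtain _ | _ | _ | _ | _ | _ | _ | _ | i := i <;> simp [sector]

lemma sectorIndex_eq_of_mem_sector {i : ℕ} {u : ℝ} (hu : u ∈ sector i) : sectorIndex u = i := by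
  have h1 := one_lt_sqrt_two
  have h2 := sqrt_two_lt_three_halves
  obtain _ | _ | _ | _ | _ | _ | _ | _ | i := i <;>
    simp only [sector, mem_Ioi, mem_Ioo, mem_Iio, mem_empty_iff_false] at hu <;>
    unfold sectorIndex <;> split_ifs <;> linarith

lemma pairwiseDisjoint_sector (s : Set ℕ) : s.PairwiseDisjoint sector :=
  fun _ _ _ _ hij => Set.disjoint_left.2 fun _ hi hj =>
    hij ((sectorIndex_eq_of_mem_sector hi).symm.trans (sectorIndex_eq_of_mem_sector hj))

lemma mem_sector_sectorIndex {u : ℝ}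
    (hu : u ∉ ({1 + √2, 1, √2 - 1, 0, 1 - √2, -1, -(1 + √2)} : Set ℝ)) :
    u ∈ sector (sectorIndex u) := by
  simp only [mem_insert_iff, mem_singleton_iff, not_or] at hu
  obtain ⟨h0, h1, h2, h3, h4, h5, h6⟩ := hu
  unfold sectorIndex
  split_ifs <;> simp only [sector, mem_Ioi, mem_Ioo, mem_Iio] <;> push Not at * <;>
    split_ands <;> first | assumption | exact lt_of_le_of_ne ‹_› ‹_›

lemma sectorIndex_le (u : ℝ) : sectorIndex u ≤ 7 := by
  unfold sectorIndex; split_ifs <;> omega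

lemma biUnion_sector_ae_eq_Iio :
    ⋃ i ∈ Finset.Icc 1 7, sector i =ᵐ[volume] Iio (1 + √2) := by
  have hcut := measure_eq_zero_iff_ae_notMem.1 <| Set.Finite.measure_zero (Set.toFinite
    ({1 + √2, 1, √2 - 1, 0, 1 - √2, -1, -(1 + √2)} : Set ℝ)) volume
  filter_upwards [hcut] with u hu
  have hidx := mem_sector_sectorIndex hu
  have huK : u ≠ 1 + √2 := fun h => hu (.inl h)
  refine propext (?_ : u ∈ ⋃ i ∈ Finset.Icc 1 7, sector i ↔ u ∈ Iio (1 + √2))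
  simp only [mem_iUnion, Finset.mem_Icc, exists_prop, mem_Iio]
  constructor
  · rintro ⟨i, ⟨hi, -⟩, hui⟩
    refine lt_of_le_of_ne (not_lt.1 fun hKu => ?_) huK
    have := (sectorIndex_eq_of_mem_sector hui).symm.trans
      (sectorIndex_eq_of_mem_sector (i := 0) hKu)
    omega
  · intro huK
    refine ⟨sectorIndex u, ⟨Nat.one_le_iff_ne_zero.2 fun h0 => ?_, sectorIndex_le u⟩, hidx⟩
    rw [h0] at hidx
    exact absurd hidx (not_lt.2 huK.le)

lemma mob_nu_one : mob (nu 1) = fun u => (u + 1) / (u - 1) := by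
  rw [nu, mob_smul (by positivity)]; ext u; simp [mob, sub_eq_add_neg]

lemma mob_nu_two : mob (nu 2) = fun u => (u + 1) / (1 - u) := by
  rw [nu, mob_smul (by positivity)]; ext u; simp [mob]; ring

lemma mob_nu_three : mob (nu 3) = fun u => 1 / u := by
  ext u; simp [nu, mob]

lemma mob_nu_four : mob (nu 4) = fun u => -1 / u := by
  ext u; simp [nu, mob]; ring

lemma mob_nu_five : mob (nu 5) = fun u => (1 - u) / (1 + u) := by
  rw [nu, mob_smul (by positivity)]; ext u; simp [mob]; ring

lemma mob_nu_six : mob (nu 6) = fun u => (1 - u) / (-1 - u) := by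
  rw [nu, mob_smul (by positivity)]; ext u; simp [mob]; ring

lemma mob_nu_seven : mob (nu 7) = fun u => -u := by
  ext u; simp [nu, mob]

lemma swap_two_six_mem_Icc {i : ℕ} (hi : i ∈ Finset.Icc 1 7) : τ i ∈ Finset.Icc 1 7 := by
  obtain ⟨hi1, hi7⟩ := Finset.mem_Icc.1 hi
  interval_cases i <;> decide

lemma nu_mul_nu_swap {i : ℕ} (hi : i ∈ Finset.Icc 1 7) :
    nu i * nu (τ i) = 1 ∨ nu i * nu (τ i) = -1 := by
  obtain ⟨hi1, hi7⟩ := Finset.mem_Icc.1 hi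
  interval_cases i <;>
    norm_num [nu, Equiv.swap_apply_of_ne_of_ne, ← mul_inv, ← Matrix.ext_iff, Fin.forall_fin_two]

lemma det_nu_ne_zero {i : ℕ} (hi : i ∈ Finset.Icc 1 7) : (nu i).det ≠ 0 := by
  intro h
  rcases nu_mul_nu_swap hi with h' | h' <;>
    simpa [h, Matrix.det_neg] using congrArg Matrix.det h'

lemma nu_denom_ne_zero {i : ℕ} (hi : i ∈ Finset.Icc 1 7) {u : ℝ}
    (hu : u ∈ sector 0 ∪ sector i) : nu i 1 0 * u + nu i 1 1 ≠ 0 := by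
  have h1 := one_lt_sqrt_two
  have h2 := sqrt_two_lt_three_halves
  obtain ⟨hi1, hi7⟩ := Finset.mem_Icc.1 hi
  interval_cases i <;> simp [nu, sector] at hu ⊢ <;> intro h <;> (try field_simp at h) <;>
    rcases hu with hu | ⟨hu, hu'⟩ <;> linarith

lemma mapsTo_nu_sector_zero {i : ℕ} (hi : i ∈ Finset.Icc 1 7) :
    MapsTo (mob (nu i)) (sector 0) (sector (τ i)) := by
  have h1 := one_lt_sqrt_two
  have h2 := sqrt_two_lt_three_halves
  obtain ⟨hi1, hi7⟩ := Finset.mem_Icc.1 hi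
  intro u (hu : _ < u)
  interval_cases i <;>
    simp only [Equiv.swap_apply_of_ne_of_ne, Equiv.swap_apply_left, Equiv.swap_apply_right,
      sector, mob_nu_one, mob_nu_two, mob_nu_three, mob_nu_four, mob_nu_five, mob_nu_six,
      mob_nu_seven, mem_Ioo, mem_Iio, ne_eq, Nat.reduceEqDiff, not_false_eq_true] <;>
    split_ands <;>
    first
    | rw [lt_div_iff₀ (by linarith)] | rw [lt_div_iff_of_neg (by linarith)]
    | rw [div_lt_iff₀ (by linarith)] | rw [div_lt_iff_of_neg (by linarith)] | skip
  all_goals nlinarith [Real.sq_sqrt (show (0 : ℝ) ≤ 2 by norm_num)]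

lemma mapsTo_nu_sector {i : ℕ} (hi : i ∈ Finset.Icc 1 7) :
    MapsTo (mob (nu i)) (sector i) (sector 0) := by
  have h1 := one_lt_sqrt_two
  have h2 := sqrt_two_lt_three_halves
  obtain ⟨hi1, hi7⟩ := Finset.mem_Icc.1 hi
  interval_cases i <;> intro u hu <;>
    simp only [sector, mob_nu_one, mob_nu_two, mob_nu_three, mob_nu_four, mob_nu_five,
      mob_nu_six, mob_nu_seven, mem_Ioo, mem_Ioi, mem_Iio] at hu ⊢ <;>
    first
    | rw [lt_div_iff₀ (by linarith)] | rw [lt_div_iff_of_neg (by linarith)] | skip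
  all_goals nlinarith [Real.sq_sqrt (show (0 : ℝ) ≤ 2 by norm_num)]

lemma image_nu_sector_zero {i : ℕ} (hi : i ∈ Finset.Icc 1 7) :
    mob (nu i) '' sector 0 = sector (τ i) :=
  image_mob_eq_of_mul_eq_one_or_neg_one (nu_mul_nu_swap hi)
    (fun _ hy => nu_denom_ne_zero (swap_two_six_mem_Icc hi) (.inr hy)) (mapsTo_nu_sector_zero hi)
    (mapsTo_nu_sector (swap_two_six_mem_Icc hi))

lemma image_nu_sector {i : ℕ} (hi : i ∈ Finset.Icc 1 7) :
    mob (nu i) '' sector i = sector 0 :=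
  image_mob_eq_of_mul_eq_one_or_neg_one (nu_mul_nu_swap hi)
    (fun _ hy => nu_denom_ne_zero (swap_two_six_mem_Icc hi) (.inl hy)) (mapsTo_nu_sector hi)
    (by simpa using mapsTo_nu_sector_zero (swap_two_six_mem_Icc hi))

lemma mob_gam : mob gam = fun u => 2 + 2 * √2 - u := by
  ext u; simp [gam, mob]; ring

lemma det_gam : gam.det = -1 := by
  simp [gam, Matrix.det_fin_two]

lemma gam_mul_apply_one (N : Matrix (Fin 2) (Fin 2) ℝ) (j : Fin 2) : (gam * N) 1 j = N 1 j := by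
  simp [gam, Matrix.mul_apply, Fin.sum_univ_two]

lemma image_mob_gam_mul {N : Matrix (Fin 2) (Fin 2) ℝ} {S : Set ℝ}
    (hS : ∀ u ∈ S, N 1 0 * u + N 1 1 ≠ 0) : mob (gam * N) '' S = mob gam '' (mob N '' S) := by
  rw [image_image]
  exact image_congr fun u hu => mob_mul (hS u hu)

lemma image_gam_sector_zero : mob gam '' sector 0 = Iio (1 + √2) := by
  rw [mob_gam, sector, image_const_sub_Ioi]; ring_nf

lemma image_gam_Iio : mob gam '' Iio (1 + √2) = sector 0 := by
  rw [mob_gam, sector, image_const_sub_Iio]; ring_nf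

lemma measurable_sectorIndex : Measurable sectorIndex := by
  unfold sectorIndex
  repeat refine Measurable.ite measurableSet_Ioi measurable_const ?_
  exact measurable_const

lemma measurable_Fhat : Measurable Fhat := by
  have hidx : Measurable fun p : ℝ × ℝ => sectorIndex p.1 :=
    measurable_sectorIndex.comp measurable_fst
  have hpiece : Measurable fun q : (ℝ × ℝ) × ℕ =>
      (mob (gam * nu q.2) q.1.1, mob (gam * nu q.2) q.1.2) :=
    measurable_from_prod_countable_left fun n =>
      (measurable_mob (gam * nu n)).prodMap (measurable_mob (gam * nu n))
  have hzero : MeasurableSet {p : ℝ × ℝ | sectorIndex p.1 = 0} :=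
    hidx (measurableSet_singleton 0)
  unfold Fhat
  exact Measurable.ite hzero measurable_id (hpiece.comp (measurable_id.prodMk hidx) :)

lemma Fhat_eq_of_mem_sector {i : ℕ} (hi : i ∈ Finset.Icc 1 7) {p : ℝ × ℝ}
    (hp : p.1 ∈ sector i) : Fhat p = Prod.map (mob (gam * nu i)) (mob (gam * nu i)) p := by
  have hi0 : i ≠ 0 := by have := (Finset.mem_Icc.1 hi).1; omega
  rw [Fhat, sectorIndex_eq_of_mem_sector hp, if_neg hi0]
  rfl

lemma fareyMeasureHat_eq :
    fareyMeasureHat = geodesicMeasure.restrict (Iio (1 + √2) ×ˢ sector 0) := by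
  rw [fareyMeasureHat, withDensity_indicator (measurableSet_Iio.prod measurableSet_Ioi),
    geodesicMeasure, restrict_withDensity (measurableSet_Iio.prod (measurableSet_sector 0))]
  rfl

lemma geodesicMeasure_restrict_Iio_prod {B : Set ℝ} (hB : MeasurableSet B) :
    geodesicMeasure.restrict (Iio (1 + √2) ×ˢ B) =
      ∑ i ∈ Finset.Icc 1 7, geodesicMeasure.restrict (sector i ×ˢ B) := by
  refine Measure.restrict_eq_sum_of_ae_eq_biUnion (fun i => (measurableSet_sector i).prod hB)
    (fun i hi j hj hij => (pairwiseDisjoint_sector _ hi hj hij).set_prod_left _ _) ?_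
  rw [← iUnion₂_prod_const]
  exact geodesicMeasure_ae_eq_of_prod (Measure.set_prod_ae_eq biUnion_sector_ae_eq_Iio (by rfl))

lemma geodesicMeasure_restrict_prod_Iio {A : Set ℝ} (hA : MeasurableSet A) :
    geodesicMeasure.restrict (A ×ˢ Iio (1 + √2)) =
      ∑ i ∈ Finset.Icc 1 7, geodesicMeasure.restrict (A ×ˢ sector i) := by
  refine Measure.restrict_eq_sum_of_ae_eq_biUnion (fun i => hA.prod (measurableSet_sector i))
    (fun i hi j hj hij => (pairwiseDisjoint_sector _ hi hj hij).set_prod_right _ _) ?_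
  rw [← prod_iUnion₂]
  exact geodesicMeasure_ae_eq_of_prod (Measure.set_prod_ae_eq (by rfl) biUnion_sector_ae_eq_Iio)

lemma map_Fhat_restrict_sector_prod {i : ℕ} (hi : i ∈ Finset.Icc 1 7) :
    (geodesicMeasure.restrict (sector i ×ˢ sector 0)).map Fhat =
      geodesicMeasure.restrict (Iio (1 + √2) ×ˢ (mob gam '' sector (τ i))) := by
  have hpole : ∀ u ∈ sector 0 ∪ sector i, (gam * nu i) 1 0 * u + (gam * nu i) 1 1 ≠ 0 := by
    simpa only [gam_mul_apply_one] using fun u hu => nu_denom_ne_zero hi hu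
  have hdet : (gam * nu i).det ≠ 0 := by
    rw [Matrix.det_mul, det_gam]; exact mul_ne_zero (by norm_num) (det_nu_ne_zero hi)
  rw [Measure.map_congr ((ae_restrict_mem ((measurableSet_sector i).prod
      (measurableSet_sector 0))).mono fun p hp => Fhat_eq_of_mem_sector hi hp.1),
    map_prodMap_mob_geodesicMeasure_prod hdet (measurableSet_sector i) (measurableSet_sector 0)
      (fun u hu => hpole u (.inr hu)) (fun u hu => hpole u (.inl hu)),
    image_mob_gam_mul fun u hu => nu_denom_ne_zero hi (.inr hu),
    image_mob_gam_mul fun u hu => nu_denom_ne_zero hi (.inl hu),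
    image_nu_sector hi, image_nu_sector_zero hi, image_gam_sector_zero]

lemma map_gam_restrict_sector_zero_prod {B : Set ℝ} (hB : MeasurableSet B) :
    (geodesicMeasure.restrict (sector 0 ×ˢ B)).map (Prod.map (mob gam) (mob gam)) =
      geodesicMeasure.restrict (Iio (1 + √2) ×ˢ (mob gam '' B)) := by
  have hpole (u : ℝ) : gam 1 0 * u + gam 1 1 ≠ 0 := by simp [gam]
  rw [map_prodMap_mob_geodesicMeasure_prod (by rw [det_gam]; norm_num) (measurableSet_sector 0) hB
    (fun u _ => hpole u) (fun u _ => hpole u), image_gam_sector_zero]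

theorem map_Fhat_fareyMeasureHat : fareyMeasureHat.map Fhat = fareyMeasureHat := by
  set ω := geodesicMeasure
  set Γ := Prod.map (mob gam) (mob gam)
  have hΓ : Measurable Γ := (measurable_mob gam).prodMap (measurable_mob gam)
  have hτ : {i | τ i ≠ i} ⊆ (Finset.Icc 1 7 : Set ℕ) := fun i (hi : τ i ≠ i) => by
    rw [Equiv.swap_apply_ne_self_iff] at hi
    simp only [Finset.coe_Icc, mem_Icc]; omega
  rw [fareyMeasureHat_eq]
  calc (ω.restrict (Iio (1 + √2) ×ˢ sector 0)).map Fhat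
      = ∑ i ∈ Finset.Icc 1 7, (ω.restrict (sector i ×ˢ sector 0)).map Fhat := by
        rw [geodesicMeasure_restrict_Iio_prod (measurableSet_sector 0),
          Measure.map_finset_sum measurable_Fhat.aemeasurable]
    _ = ∑ i ∈ Finset.Icc 1 7, ω.restrict (Iio (1 + √2) ×ˢ (mob gam '' sector (τ i))) :=
        Finset.sum_congr rfl fun i hi => map_Fhat_restrict_sector_prod hi
    _ = ∑ i ∈ Finset.Icc 1 7, ω.restrict (Iio (1 + √2) ×ˢ (mob gam '' sector i)) :=
        Equiv.Perm.sum_comp τ _ (fun i => ω.restrict (Iio (1 + √2) ×ˢ (mob gam '' sector i))) hτ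
    _ = ∑ i ∈ Finset.Icc 1 7, (ω.restrict (sector 0 ×ˢ sector i)).map Γ :=
        Finset.sum_congr rfl fun i _ =>
          (map_gam_restrict_sector_zero_prod (measurableSet_sector i)).symm
    _ = (ω.restrict (sector 0 ×ˢ Iio (1 + √2))).map Γ := by
        rw [geodesicMeasure_restrict_prod_Iio (measurableSet_sector 0),
          Measure.map_finset_sum hΓ.aemeasurable]
    _ = ω.restrict (Iio (1 + √2) ×ˢ sector 0) := by
        rw [map_gam_restrict_sector_zero_prod measurableSet_Iio, image_gam_Iio]

end Octagon

/-- The measure with density `1/(u-v)²` on `Σ × Σ₀` is invariant under the natural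
extension `F̂` of the octagon Farey map. -/
theorem fareyMeasureHat_invariant (D : Set (ℝ × ℝ)) (hD : MeasurableSet D) :
    fareyMeasureHat (Fhat ⁻¹' D) = fareyMeasureHat D := by
  rw [← Measure.map_apply measurable_Fhat hD, map_Fhat_fareyMeasureHat]
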